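/- arXiv:1207.2703 — 2 statements merged into one kernel-verified Lean document; each statement's English description precedes it below -/
import Mathlib

section
/- Let K be a 2×2 real matrix and M the associated 3×3 matrix M = [[k11², 2k11k12, k12²], [k11k21, k11k22 + k12k21, k12k22], [k21², 2k21k22, k22²]]. If both eigenvalues of K have absolute value strictly less than 1, then det(I - M) ≠ 0, i.e., I - M is invertible. -/
/-! If `K` has eigenvalues `λ₁, λ₂`, then `M` is the matrix of `X ↦ K X Kᵀ` on symmetric `2 × 2`
matrices and has eigenvalues `λ₁², λ₁λ₂, λ₂²`. Concretely,
`det (1 - M) = (1 - det K) (1 - tr K + det K) (1 + tr K + det K)`: the last two factors are the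
characteristic polynomial of `K` at `±1`, nonzero since `±1` lie outside the open unit disk, and
`|det K| = |λ₁ λ₂| < 1` kills the first. -/

open Matrix

theorem det_one_sub_symmetricSquare {R : Type*} [CommRing R] (a b c d : R) :
    det (1 - !![a ^ 2, 2 * a * b, b ^ 2;
                a * c, a * d + b * c, b * d;
                c ^ 2, 2 * c * d, d ^ 2]) =
      (1 - (a * d - b * c)) * (1 - (a + d) + (a * d - b * c)) * (1 + (a + d) + (a * d - b * c)) := by
  simp only [det_fin_three, Matrix.sub_apply, one_apply, of_apply, cons_val', cons_val_zero,
    cons_val_fin_one, cons_val_one, cons_val, Fin.isValue, Fin.reduceEq, if_true, if_false]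
  ring

section MonicQuadratic

variable {t d : ℂ} (hroots : ∀ z : ℂ, z ^ 2 - t * z + d = 0 → ‖z‖ < 1)
include hroots

/-- Vieta: with `z` a root, `t - z` is the other one and `z (t - z) = d`. -/
theorem norm_const_lt_one_of_roots_norm_lt_one : ‖d‖ < 1 := by
  obtain ⟨s, hs⟩ := IsAlgClosed.exists_eq_mul_self (discrim 1 (-t) d)
  obtain ⟨z, hz⟩ := exists_quadratic_eq_zero one_ne_zero ⟨s, hs⟩
  have hz_root : z ^ 2 - t * z + d = 0 := by linear_combination hz
  have hz'_root : (t - z) ^ 2 - t * (t - z) + d = 0 := by linear_combination hz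
  have hprod : z * (t - z) = d := by linear_combination -hz
  calc ‖d‖ = ‖z‖ * ‖t - z‖ := by rw [← hprod, norm_mul]
    _ < 1 := mul_lt_one_of_nonneg_of_lt_one_left (norm_nonneg _) (hroots z hz_root)
        (hroots _ hz'_root).le

theorem one_sub_const_mul_eval_one_mul_eval_neg_one_ne_zero :
    (1 - d) * (1 - t + d) * (1 + t + d) ≠ 0 := by
  have hd : d ≠ 1 := fun h ↦ by
    simpa [h] using norm_const_lt_one_of_roots_norm_lt_one hroots
  have h_one : (1 : ℂ) - t + d ≠ 0 := fun h ↦ by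
    simpa using hroots 1 (by linear_combination h)
  have h_neg_one : (1 : ℂ) + t + d ≠ 0 := fun h ↦ by
    simpa using hroots (-1) (by linear_combination h)
  exact mul_ne_zero (mul_ne_zero (sub_ne_zero.mpr hd.symm) h_one) h_neg_one

end MonicQuadratic

theorem one_sub_M_invertible_of_stable (k11 k12 k21 k22 : ℝ)
    (K : Matrix (Fin 2) (Fin 2) ℝ) (hK : K = !![k11, k12; k21, k22])
    (M : Matrix (Fin 3) (Fin 3) ℝ)
    (hM : M = !![k11 ^ 2, 2 * k11 * k12, k12 ^ 2;
                 k11 * k21, k11 * k22 + k12 * k21, k12 * k22;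
                 k21 ^ 2, 2 * k21 * k22, k22 ^ 2])
    (hstab : ∀ lam : ℂ,
      lam ^ 2 - ((Matrix.trace K : ℝ) : ℂ) * lam + ((Matrix.det K : ℝ) : ℂ) = 0 → ‖lam‖ < 1) :
    Matrix.det (1 - M) ≠ 0 := by
  have hfactor : det (1 - M) = (1 - K.det) * (1 - K.trace + K.det) * (1 + K.trace + K.det) := by
    rw [hM, det_one_sub_symmetricSquare, hK, det_fin_two_of, trace_fin_two_of]
  rw [hfactor]
  exact_mod_cast one_sub_const_mul_eval_one_mul_eval_neg_one_ne_zero hstab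
end

section
/- Let τ, δ ∈ ℝ with Δ := (δ - τ + 1)(δ + τ + 1)(1 - δ) ≠ 0, and let A = [[τ, 1], [-δ, 0]]. Given a symmetric matrix Θ = [[θ11, θ12], [θ12, θ22]], define (φ11, φ12, φ22) = (1/Δ) · N · (θ11, θ12, θ22) where N = [[1+δ, 2τ, 1+δ], [-τδ, 1-τ²-δ², -τδ], [δ²+δ³, 2τδ², 1+δ-τ²+τ²δ]]. Then the symmetric matrix Φ = [[φ11, φ12], [φ12, φ22]] satisfies Θ = Φ - A Φ Aᵀ. -/
set_option maxHeartbeats 1000000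

open Matrix

theorem theta_inf_formula (τ δ t11 t12 t22 : ℝ)
    (hΔ : (δ - τ + 1) * (δ + τ + 1) * (1 - δ) ≠ 0)
    (A : Matrix (Fin 2) (Fin 2) ℝ) (hA : A = !![τ, 1; -δ, 0])
    (Θ : Matrix (Fin 2) (Fin 2) ℝ) (hΘ : Θ = !![t11, t12; t12, t22])
    (φ11 φ12 φ22 : ℝ)
    (hφ11 : φ11 = (1 / ((δ - τ + 1) * (δ + τ + 1) * (1 - δ))) *
      ((1 + δ) * t11 + 2 * τ * t12 + (1 + δ) * t22))
    (hφ12 : φ12 = (1 / ((δ - τ + 1) * (δ + τ + 1) * (1 - δ))) *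
      ((-(τ * δ)) * t11 + (1 - τ ^ 2 - δ ^ 2) * t12 + (-(τ * δ)) * t22))
    (hφ22 : φ22 = (1 / ((δ - τ + 1) * (δ + τ + 1) * (1 - δ))) *
      ((δ ^ 2 + δ ^ 3) * t11 + 2 * τ * δ ^ 2 * t12 + (1 + δ - τ ^ 2 + τ ^ 2 * δ) * t22))
    (Φ : Matrix (Fin 2) (Fin 2) ℝ) (hΦ : Φ = !![φ11, φ12; φ12, φ22]) :
    Θ = Φ - A * Φ * Aᵀ := by
  subst hA hΘ hφ11 hφ12 hφ22 hΦ
  have hT : (!![τ, 1; -δ, 0] : Matrix (Fin 2) (Fin 2) ℝ)ᵀ = !![τ, -δ; 1, 0] := by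
    ext i j; fin_cases i <;> fin_cases j <;> rfl
  rw [hT, Matrix.mul_fin_two, Matrix.mul_fin_two]
  have ha : (δ - τ + 1) ≠ 0 := fun h => hΔ (by rw [h]; ring)
  have hb : (δ + τ + 1) ≠ 0 := fun h => hΔ (by rw [h]; ring)
  have hc : (1 - δ) ≠ 0 := fun h => hΔ (by rw [h]; ring)
  have h0a : (1:ℝ) + δ + (δ * τ ^ 2 - δ ^ 2) + (-δ ^ 3 - τ ^ 2) ≠ 0 := by
    intro h; exact hΔ (by linear_combination h)
  have h0b : (1:ℝ) - τ ^ 2 + τ ^ 2 * δ + δ + (-δ ^ 2 - δ ^ 3) ≠ 0 := by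
    intro h; exact hΔ (by linear_combination h)
  ext i j
  fin_cases i <;> fin_cases j <;>
    simp [Matrix.cons_val_zero, Matrix.cons_val_one, Matrix.head_cons] <;>
    field_simp [ha, hb, hc, h0a, h0b] <;> ring
end
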